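/- Let n ≥ 3, let C be the n×n companion matrix built from a₁,…,aₙ ∈ ℝ, let d ∈ ℝⁿ with d₁ ≠ 0, and let μ ∈ ℝ. For x ∈ ℝⁿ with x₁ = 0, define G = Cx + eₙμ − (x₂/d₁) d (the sliding vector field of the normal form scaled by the positive factor (F₁ᴸ − F₁ᴿ)/(−F₁ᴿ)). Then G₁ = 0 and the reduced vector (G₂,…,Gₙ) ∈ ℝ^{n−1} equals M̃(x₂,…,xₙ)ᵀ + μ ẽ_{n−1}, where M̃ is the (n−1)×(n−1) companion matrix with entries M̃_{i,1} = −d_{i+1}/d₁ for i = 1,…,n−1, M̃_{i,i+1} = 1 for i = 1,…,n−2, all other entries zero, and ẽ_{n−1} is the last standard basis vector of ℝ^{n−1}. -/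

import Mathlib

open Matrix

/-- The `n×n` companion matrix with first column `(−a₁,…,−aₙ)ᵀ` and
superdiagonal ones (`a i` encodes `a_{i+1}`). -/
def compC {n : ℕ} (a : Fin (n + 1) → ℝ) : Matrix (Fin (n + 1)) (Fin (n + 1)) ℝ :=
  Matrix.of fun i j =>
    if (j : ℕ) = 0 then -a i else if (j : ℕ) = (i : ℕ) + 1 then 1 else 0

/-- The `(n−1)×(n−1)` companion matrix `M̃` of the scaled sliding vector field,
built from `d` with `M̃_{i,1} = −d_{i+1}/d₁`. -/
noncomputable def slidingComp {n : ℕ} (d : Fin (n + 3) → ℝ) :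
    Matrix (Fin (n + 2)) (Fin (n + 2)) ℝ :=
  Matrix.of fun i j =>
    if (j : ℕ) = 0 then -d i.succ / d 0
    else if (j : ℕ) = (i : ℕ) + 1 then 1 else 0

/-!
Both `C` and `M̃` are companion matrices: first column `c`, ones on the superdiagonal, so
`(M y)ᵢ = cᵢ y₁ + yᵢ₊₁`, without the second term in the last row. Since `x₁ = 0`, row `i + 1`
of `G` is `xᵢ₊₂ − (x₂ / d₁) dᵢ₊₁` (plus `μ` in the last row), which is row `i` of `M̃`
applied to `(x₂, …, xₙ)`; row `1` is `x₂ − (x₂ / d₁) d₁ = 0`.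
-/

section Companion

variable {R : Type*} [NonAssocSemiring R] {m : ℕ}

def companion (c : Fin (m + 1) → R) : Matrix (Fin (m + 1)) (Fin (m + 1)) R :=
  Matrix.of fun i j => if (j : ℕ) = 0 then c i else if (j : ℕ) = (i : ℕ) + 1 then 1 else 0

theorem companion_mulVec_apply (c y : Fin (m + 1) → R) (i : Fin (m + 1)) :
    (companion c *ᵥ y) i = c i * y 0 + ∑ j : Fin m, if (j : ℕ) = i then y j.succ else 0 := by
  simp [companion, mulVec, dotProduct, Fin.sum_univ_succ]

theorem companion_mulVec_castSucc (c y : Fin (m + 1) → R) (i : Fin m) :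
    (companion c *ᵥ y) i.castSucc = c i.castSucc * y 0 + y i.succ := by
  simp [companion_mulVec_apply, Fin.val_inj]

theorem companion_mulVec_last (c y : Fin (m + 1) → R) :
    (companion c *ᵥ y) (Fin.last m) = c (Fin.last m) * y 0 := by
  rw [companion_mulVec_apply, Finset.sum_eq_zero fun j _ => if_neg j.isLt.ne, add_zero]

end Companion

theorem sliding_vectorField_reduction (n : ℕ) (a : Fin (n + 3) → ℝ)
    (d : Fin (n + 3) → ℝ) (hd : d 0 ≠ 0) (μ : ℝ)
    (x : Fin (n + 3) → ℝ) (hx1 : x 0 = 0) :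
    ((compC a).mulVec x + μ • (Pi.single (Fin.last (n + 2)) (1 : ℝ) : Fin (n + 3) → ℝ)
        - (x 1 / d 0) • d) 0 = 0 ∧
      (fun i : Fin (n + 2) =>
          ((compC a).mulVec x
            + μ • (Pi.single (Fin.last (n + 2)) (1 : ℝ) : Fin (n + 3) → ℝ)
            - (x 1 / d 0) • d) i.succ)
        = (slidingComp d).mulVec (fun i : Fin (n + 2) => x i.succ)
          + μ • (Pi.single (Fin.last (n + 1)) (1 : ℝ) : Fin (n + 2) → ℝ) := by
  have hC : compC a = companion (-a) := rfl
  have hS : slidingComp d = companion fun i => -d i.succ / d 0 := rfl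
  have hCx0 : (compC a *ᵥ x) 0 = x 1 := by
    simpa [hC, hx1] using companion_mulVec_castSucc (-a) x 0
  refine ⟨by simp [hCx0, hd], funext fun i => ?_⟩
  induction i using Fin.lastCases with
  | last =>
    simp only [hC, hS, Pi.sub_apply, Pi.add_apply, Pi.smul_apply, Pi.neg_apply, smul_eq_mul,
      Fin.succ_last, companion_mulVec_last, Pi.single_eq_same, Fin.succ_zero_eq_one, hx1]
    ring
  | cast j =>
    simp only [hC, hS, Pi.sub_apply, Pi.add_apply, Pi.smul_apply, Pi.neg_apply, smul_eq_mul,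
      Fin.succ_castSucc, companion_mulVec_castSucc, Pi.single_eq_of_ne (Fin.castSucc_ne_last _),
      Fin.succ_zero_eq_one, hx1]
    ring
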